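/- For every integer N ≥ 2 and every real T > 0 there exist disjoint finite sets F and C with |F| = N and |C| = N + 1, and a metric d on F ∪ C, such that: (a) SC-LP(T, N) has a feasible fractional solution (in fact one with y_i = 1 for all i ∈ F and every facility load exactly T); and (b) every star cover of (F, C) — in particular even one using all N facilities — has load at least (2 − 1/N)·T. -/

import Mathlib

open scoped NNReal

/-- A star cover of `(F, C)`: a finite collection of pairwise disjoint stars
`(f, C_f)` with `f ∈ F`, `C_f ⊆ C`, whose client sets have union `C`. -/
structure StarCover {X : Type*} [MetricSpace X] (F C : Finset X) where
  stars : Finset (X × Finset X)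
  fac_mem : ∀ p ∈ stars, p.1 ∈ F
  cli_sub : ∀ p ∈ stars, p.2 ⊆ C
  fac_inj : ∀ p ∈ stars, ∀ q ∈ stars, p ≠ q → p.1 ≠ q.1
  cli_disj : ∀ p ∈ stars, ∀ q ∈ stars, p ≠ q → Disjoint p.2 q.2
  covers : ∀ c ∈ C, ∃ p ∈ stars, c ∈ p.2

/-- The size of a star cover is its number of stars. -/
def StarCover.size {X : Type*} [MetricSpace X] {F C : Finset X}
    (S : StarCover F C) : ℕ :=
  S.stars.card

/-- The load of a star cover: the maximum over its stars `(f, C_f)` of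
`∑_{c ∈ C_f} d(f, c)`. -/
noncomputable def StarCover.load {X : Type*} [MetricSpace X] {F C : Finset X}
    (S : StarCover F C) : ℝ :=
  ((S.stars.sup fun p => ∑ c ∈ p.2, nndist p.1 c : ℝ≥0) : ℝ)

/-- Feasibility for the LP relaxation `SC-LP(T, k)` of the star cover problem. -/
def SCLPFeasible {X : Type*} [MetricSpace X] (F C : Finset X) (T : ℝ) (k : ℕ)
    (x : X → X → ℝ) (y : X → ℝ) : Prop :=
  (∀ i ∈ F, ∀ j ∈ C, x i j ∈ Set.Icc (0 : ℝ) 1) ∧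
  (∀ i ∈ F, y i ∈ Set.Icc (0 : ℝ) 1) ∧
  (∀ i ∈ F, ∑ j ∈ C, dist i j * x i j ≤ T * y i) ∧
  (∑ i ∈ F, y i ≤ (k : ℝ)) ∧
  (∀ j ∈ C, ∑ i ∈ F, x i j = 1) ∧
  (∀ i ∈ F, ∀ j ∈ C, x i j ≤ y i) ∧
  (∀ i ∈ F, ∀ j ∈ C, T < dist i j → x i j = 0)

/-- The fractional load of facility `i` under assignment `x`. -/
noncomputable def facLoad {X : Type*} [MetricSpace X] (C : Finset X)
    (x : X → X → ℝ) (i : X) : ℝ :=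
  ∑ j ∈ C, dist i j * x i j

/-! The example has one facility per point of `Fin N`, a private client at distance
`(1 - 1/N) T` from each facility, and one shared client; all other distances are `T`.
Since `T ≤ 2 (1 - 1/N) T` for `N ≥ 2`, any such choice of distances is a metric.
Sending each private client to its facility and `1/N` of the shared client to every
facility loads each facility with exactly `(1 - 1/N) T + T/N = T`. An integral star cover
has at most `N` stars for `N + 1` clients, so some star serves two clients, at most one
of which is its private client: its load is at least `(1 - 1/N) T + T = (2 - 1/N) T`. -/

open Finset

open Classical in
/-- The triangle inequality holds because `g p r ≤ 2 a ≤ g p q + g q r`. -/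
noncomputable abbrev MetricSpace.ofPinched {α : Type*} (g : α → α → ℝ) {a : ℝ} (ha : 0 < a)
    (symm : ∀ p q, g p q = g q p) (le_g : ∀ p q, a ≤ g p q) (g_le : ∀ p q, g p q ≤ 2 * a) :
    MetricSpace α where
  dist p q := if p = q then 0 else g p q
  dist_self _ := if_pos rfl
  dist_comm p q := by rw [symm p q]; exact if_congr eq_comm rfl rfl
  dist_triangle p q r := by
    have hnonneg : ∀ x y : α, 0 ≤ if x = y then 0 else g x y := fun x y => by
      split_ifs
      · exact le_rfl
      · linarith [le_g x y]
    by_cases hpr : p = r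
    · simp only [hpr, if_true]
      exact add_nonneg (hnonneg _ _) (hnonneg _ _)
    by_cases hpq : p = q
    · subst hpq; simp
    by_cases hqr : q = r
    · subst hqr; simp
    simp only [hpr, hpq, hqr, if_false]
    linarith [g_le p r, le_g p q, le_g q r]
  eq_of_dist_eq_zero {p q} h := by
    by_contra hpq
    simp only [hpq, if_false] at h
    linarith [le_g p q]

namespace StarCover

variable {X : Type*} [MetricSpace X] {F C : Finset X} (S : StarCover F C)

lemma card_stars_le : S.stars.card ≤ F.card :=
  card_le_card_of_injOn Prod.fst S.fac_mem fun p hp q hq hpq =>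
    not_imp_not.mp (S.fac_inj p hp q hq) hpq

lemma sum_dist_le_load {p : X × Finset X} (hp : p ∈ S.stars) :
    ∑ c ∈ p.2, dist p.1 c ≤ S.load := by
  have hle := Finset.le_sup (f := fun p : X × Finset X => ∑ c ∈ p.2, nndist p.1 c) hp
  simpa [StarCover.load, ← coe_nndist] using (NNReal.coe_le_coe.mpr hle)

/-- Pigeonhole: with more clients than facilities some star serves two clients. -/
lemma le_load_of_card_lt {L : ℝ} (hcard : F.card < C.card)
    (hL : ∀ f ∈ F, ∀ c₁ ∈ C, ∀ c₂ ∈ C, c₁ ≠ c₂ → L ≤ dist f c₁ + dist f c₂) :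
    L ≤ S.load := by
  classical
  choose! star star_mem mem_star using S.covers
  obtain ⟨c₁, hc₁, c₂, hc₂, hne, hstar⟩ :=
    exists_ne_map_eq_of_card_lt_of_maps_to ((S.card_stars_le).trans_lt hcard) star_mem
  set p := star c₁
  have hp : p ∈ S.stars := star_mem c₁ hc₁
  have h₁ : c₁ ∈ p.2 := mem_star c₁ hc₁
  have h₂ : c₂ ∈ p.2 := hstar ▸ mem_star c₂ hc₂
  calc L ≤ dist p.1 c₁ + dist p.1 c₂ :=
        hL _ (S.fac_mem p hp) c₁ (S.cli_sub p hp h₁) c₂ (S.cli_sub p hp h₂) hne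
    _ = ∑ c ∈ {c₁, c₂}, dist p.1 c := (sum_pair hne).symm
    _ ≤ ∑ c ∈ p.2, dist p.1 c :=
        sum_le_sum_of_subset_of_nonneg (insert_subset h₁ (singleton_subset_iff.mpr h₂))
          fun _ _ _ => dist_nonneg
    _ ≤ S.load := S.sum_dist_le_load hp

end StarCover

/-- The parameter `T` only serves to carry the metric instance. -/
inductive GapPoint (N : ℕ) (T : ℝ) : Type
  | fac : Fin N → GapPoint N T
  | shared : GapPoint N T
  | priv : Fin N → GapPoint N T

namespace GapPoint

variable {N : ℕ} {T : ℝ}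

noncomputable def nearDist (N : ℕ) (T : ℝ) : ℝ := (1 - 1 / N) * T

lemma nearDist_pos (hN : 2 ≤ N) (hT : 0 < T) : 0 < nearDist N T := by
  have hinv : 1 / (N : ℝ) ≤ 1 / 2 :=
    one_div_le_one_div_of_le two_pos (by exact_mod_cast hN)
  unfold nearDist; nlinarith

lemma nearDist_le (hT : 0 ≤ T) : nearDist N T ≤ T := by
  unfold nearDist; nlinarith [Nat.one_div_cast_nonneg (α := ℝ) N]

lemma le_two_mul_nearDist (hN : 2 ≤ N) (hT : 0 ≤ T) : T ≤ 2 * nearDist N T := by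
  have hinv : 1 / (N : ℝ) ≤ 1 / 2 :=
    one_div_le_one_div_of_le two_pos (by exact_mod_cast hN)
  unfold nearDist; nlinarith

noncomputable def gapDist : GapPoint N T → GapPoint N T → ℝ
  | fac i, priv j | priv j, fac i => if i = j then nearDist N T else T
  | _, _ => T

lemma gapDist_symm (p q : GapPoint N T) : gapDist p q = gapDist q p := by
  cases p <;> cases q <;> rfl

lemma gapDist_eq_nearDist_or_eq (p q : GapPoint N T) :
    gapDist p q = nearDist N T ∨ gapDist p q = T := by
  cases p <;> cases q <;> simp only [gapDist, ite_eq_left_iff, ite_eq_right_iff] <;> tauto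

lemma gapDist_mem_Icc (hN : 2 ≤ N) (hT : 0 < T) (p q : GapPoint N T) :
    gapDist p q ∈ Set.Icc (nearDist N T) (2 * nearDist N T) := by
  rcases gapDist_eq_nearDist_or_eq p q with h | h <;> rw [h]
  · exact ⟨le_rfl, by linarith [nearDist_pos hN hT]⟩
  · exact ⟨nearDist_le hT.le, le_two_mul_nearDist hN hT.le⟩

noncomputable instance [Fact (2 ≤ N)] [Fact (0 < T)] : MetricSpace (GapPoint N T) :=
  MetricSpace.ofPinched gapDist (nearDist_pos Fact.out Fact.out) gapDist_symm
    (fun p q => (gapDist_mem_Icc Fact.out Fact.out p q).1)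
    (fun p q => (gapDist_mem_Icc Fact.out Fact.out p q).2)

def facilities : Finset (GapPoint N T) := univ.map ⟨fac, fun _ _ => fac.inj⟩

def clients : Finset (GapPoint N T) :=
  cons shared (univ.map ⟨priv, fun _ _ => priv.inj⟩) (by simp)

lemma disjoint_facilities_clients : Disjoint (facilities : Finset (GapPoint N T)) clients := by
  simp [disjoint_left, facilities, clients]

lemma card_facilities : (facilities : Finset (GapPoint N T)).card = N := by
  simp [facilities]

lemma card_clients : (clients : Finset (GapPoint N T)).card = N + 1 := by
  simp [clients]

lemma forall_mem_facilities {P : GapPoint N T → Prop} :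
    (∀ p ∈ facilities, P p) ↔ ∀ i, P (fac i) := by
  simp only [facilities, forall_mem_map, mem_univ, forall_const]
  rfl

lemma mem_clients {c : GapPoint N T} : c ∈ clients ↔ c = shared ∨ ∃ i, priv i = c := by
  simp only [clients, mem_cons, mem_map, mem_univ, true_and]
  rfl

lemma fac_ne_of_mem_clients {c : GapPoint N T} (hc : c ∈ clients) (i : Fin N) : fac i ≠ c := by
  rcases mem_clients.1 hc with rfl | ⟨j, rfl⟩ <;> simp

lemma sum_facilities (f : GapPoint N T → ℝ) : ∑ p ∈ facilities, f p = ∑ i, f (fac i) :=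
  sum_map _ _ _

lemma sum_clients (f : GapPoint N T → ℝ) :
    ∑ c ∈ clients, f c = f shared + ∑ i, f (priv i) := by
  rw [clients, sum_cons, sum_map]
  rfl

noncomputable def assignment : GapPoint N T → GapPoint N T → ℝ
  | fac _, shared => 1 / N
  | fac i, priv j => if i = j then 1 else 0
  | _, _ => 0

lemma assignment_mem_Icc (p q : GapPoint N T) : assignment p q ∈ Set.Icc 0 1 := by
  cases p <;> cases q <;> simp [assignment, Nat.cast_inv_le_one]
  split_ifs <;> simp

lemma sum_assignment (hN : N ≠ 0) {c : GapPoint N T} (hc : c ∈ clients) :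
    ∑ p ∈ facilities, assignment p c = 1 := by
  rcases mem_clients.1 hc with rfl | ⟨j, rfl⟩ <;> simp [sum_facilities, assignment, hN]

section Metric

variable [Fact (2 ≤ N)] [Fact (0 < T)]

lemma dist_eq_gapDist {p q : GapPoint N T} (h : p ≠ q) : dist p q = gapDist p q :=
  if_neg h

lemma dist_fac_priv_self (i : Fin N) : dist (fac i : GapPoint N T) (priv i) = nearDist N T := by
  simp [dist_eq_gapDist, gapDist]

lemma dist_fac_of_ne_priv {i : Fin N} {c : GapPoint N T} (hc : c ≠ priv i) (hfc : fac i ≠ c) :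
    dist (fac i) c = T := by
  rw [dist_eq_gapDist hfc]
  cases c with
  | priv j => exact if_neg fun hij => hc (congrArg priv hij.symm)
  | _ => rfl

lemma dist_le (p q : GapPoint N T) : dist p q ≤ T := by
  by_cases h : p = q
  · rw [h, dist_self]; exact (Fact.out : 0 < T).le
  · rw [dist_eq_gapDist h]
    rcases gapDist_eq_nearDist_or_eq p q with h | h <;> rw [h]
    exact nearDist_le (Fact.out : 0 < T).le

lemma nearDist_le_dist {p q : GapPoint N T} (h : p ≠ q) : nearDist N T ≤ dist p q :=
  dist_eq_gapDist h ▸ (gapDist_mem_Icc Fact.out Fact.out p q).1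

lemma facLoad_assignment (i : Fin N) : facLoad clients assignment (fac i : GapPoint N T) = T := by
  have hshared : dist (fac i) (shared : GapPoint N T) = T :=
    dist_fac_of_ne_priv (by simp) (by simp)
  rw [facLoad, sum_clients]
  simp only [assignment, mul_ite, mul_one, mul_zero, sum_ite_eq, mem_univ, if_true,
    dist_fac_priv_self, hshared]
  unfold nearDist; ring

lemma sclpFeasible_assignment :
    SCLPFeasible facilities clients T N assignment (fun _ : GapPoint N T => 1) := by
  refine ⟨fun p _ q _ => assignment_mem_Icc p q, fun _ _ => ⟨zero_le_one, le_rfl⟩,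
    forall_mem_facilities.2 fun i => ?_, by simp [card_facilities],
    fun c hc => sum_assignment (by have : 2 ≤ N := Fact.out; omega) hc,
    fun p _ q _ => (assignment_mem_Icc p q).2,
    fun p _ q _ hfar => absurd hfar (dist_le p q).not_gt⟩
  rw [mul_one]
  exact (facLoad_assignment i).le

lemma two_sub_mul_le_load (S : StarCover (facilities : Finset (GapPoint N T)) clients) :
    (2 - 1 / N) * T ≤ S.load := by
  refine S.le_load_of_card_lt (by rw [card_facilities, card_clients]; omega) ?_
  refine forall_mem_facilities.2 fun i c₁ hc₁ c₂ hc₂ hne => ?_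
  wlog h₁ : c₁ ≠ priv i generalizing c₁ c₂
  · rw [add_comm]
    exact this c₂ hc₂ c₁ hc₁ hne.symm (not_not.mp h₁ ▸ hne.symm)
  calc (2 - 1 / N) * T = T + nearDist N T := by unfold nearDist; ring
    _ ≤ dist (fac i) c₁ + dist (fac i) c₂ :=
      add_le_add (dist_fac_of_ne_priv h₁ (fac_ne_of_mem_clients hc₁ i)).ge
        (nearDist_le_dist (fac_ne_of_mem_clients hc₂ i))

end Metric

end GapPoint

/-- The hard instance for the MSSC LP (Appendix B of the paper): for every
`N ≥ 2` and `T > 0` there is an instance with `|F| = N`, `|C| = N + 1` whose LP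
`SC-LP(T, N)` has a feasible fractional solution opening every facility fully
with every facility load exactly `T`, yet every star cover — even one using all
`N` facilities — has load at least `(2 − 1/N)·T`. -/
theorem mssc_lp_gap (N : ℕ) (hN : 2 ≤ N) (T : ℝ) (hT : 0 < T) :
    ∃ (X : Type) (m : MetricSpace X) (F C : Finset X),
      Disjoint F C ∧ F.card = N ∧ C.card = N + 1 ∧
      (∃ (x : X → X → ℝ) (y : X → ℝ),
        @SCLPFeasible X m F C T N x y ∧
        (∀ i ∈ F, y i = 1) ∧
        (∀ i ∈ F, @facLoad X m C x i = T)) ∧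
      (∀ S : @StarCover X m F C, (2 - 1 / (N : ℝ)) * T ≤ S.load) := by
  have : Fact (2 ≤ N) := ⟨hN⟩
  have : Fact (0 < T) := ⟨hT⟩
  exact ⟨GapPoint N T, inferInstance, GapPoint.facilities, GapPoint.clients,
    GapPoint.disjoint_facilities_clients, GapPoint.card_facilities, GapPoint.card_clients,
    ⟨GapPoint.assignment, fun _ => 1, GapPoint.sclpFeasible_assignment, fun _ _ => rfl,
      GapPoint.forall_mem_facilities.2 GapPoint.facLoad_assignment⟩,
    GapPoint.two_sub_mul_le_load⟩
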